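/- arXiv:2009.04613 — 2 statements merged into one kernel-verified Lean document; each statement's English description precedes it below -/
import Mathlib

section
/- If u : ℝ^n → ℝ is a convex C² function, then the operator θ(D²u) = Σᵢ arctan(λᵢ(D²u)) is concave along convex functions: for convex symmetric positive semidefinite matrices A, B and t ∈ [0,1], Σᵢ arctan(λᵢ(tA + (1-t)B)) ≥ t Σᵢ arctan(λᵢ(A)) + (1-t) Σᵢ arctan(λᵢ(B)), where λᵢ(M) denotes the eigenvalues of the symmetric matrix M. -/
/-!
Let `v` be an orthonormal eigenbasis of `C = a • A + b • B`. Then `λᵢ(C) = ⟪vᵢ, C vᵢ⟫`, which is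
`a ⟪vᵢ, A vᵢ⟫ + b ⟪vᵢ, B vᵢ⟫`, so concavity of `f` bounds `∑ f(λᵢ(C))` below by
`a ∑ f ⟪vᵢ, A vᵢ⟫ + b ∑ f ⟪vᵢ, B vᵢ⟫`. Finally `⟪vᵢ, A vᵢ⟫ = ∑ⱼ ‖⟪eⱼ, vᵢ⟫‖² λⱼ(A)` for an
eigenbasis `e` of `A`, and the weights `‖⟪eⱼ, vᵢ⟫‖²` form a doubly stochastic matrix, so Jensen's
inequality gives `∑ f(λⱼ(A)) ≤ ∑ f ⟪vᵢ, A vᵢ⟫`.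
-/

open Real
open Matrix
open scoped InnerProductSpace

theorem Real.concaveOn_arctan_Ici : ConcaveOn ℝ (Set.Ici 0) arctan := by
  refine AntitoneOn.concaveOn_of_deriv (convex_Ici 0) continuous_arctan.continuousOn
    differentiable_arctan.differentiableOn ?_
  rw [interior_Ici, deriv_arctan]
  intro x hx y _ hxy
  have hx0 : 0 ≤ x := le_of_lt hx
  dsimp only
  gcongr

section Eigenbasis

variable {𝕜 E ι κ : Type*} [RCLike 𝕜] [NormedAddCommGroup E] [InnerProductSpace 𝕜 E]
  [Fintype ι] {T : E →ₗ[𝕜] E} {b : OrthonormalBasis ι 𝕜 E} {μ : ι → ℝ} {s : Set ℝ}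
  {f : ℝ → ℝ}

theorem re_inner_apply_self_eq_sum (hb : ∀ j, T (b j) = (μ j : 𝕜) • b j) (x : E) :
    RCLike.re ⟪x, T x⟫_𝕜 = ∑ j, ‖⟪b j, x⟫_𝕜‖ ^ 2 * μ j := by
  have hTx : T x = ∑ j, ((μ j : 𝕜) * ⟪b j, x⟫_𝕜) • b j := by
    conv_lhs => rw [← b.sum_repr' x]
    simp only [map_sum, map_smul, hb, smul_smul, mul_comm]
  simp only [hTx, inner_sum, inner_smul_right, map_sum]
  refine Finset.sum_congr rfl fun j _ => ?_
  rw [← inner_conj_symm x (b j), mul_assoc, RCLike.mul_conj, ← RCLike.ofReal_pow,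
    ← RCLike.ofReal_mul, RCLike.ofReal_re, mul_comm]

theorem sum_sq_norm_inner_eq_one {x : E} (hx : ‖x‖ = 1) : ∑ j, ‖⟪b j, x⟫_𝕜‖ ^ 2 = 1 := by
  rw [b.sum_sq_norm_inner_right, hx, one_pow]

theorem re_inner_apply_self_mem (hb : ∀ j, T (b j) = (μ j : 𝕜) • b j) (hs : Convex ℝ s)
    (hμ : ∀ j, μ j ∈ s) {x : E} (hx : ‖x‖ = 1) : RCLike.re ⟪x, T x⟫_𝕜 ∈ s := by
  rw [re_inner_apply_self_eq_sum hb]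
  exact hs.sum_mem (fun j _ => by positivity) (sum_sq_norm_inner_eq_one hx) fun j _ => hμ j

theorem ConcaveOn.sum_mul_le_map_re_inner_apply_self (hf : ConcaveOn ℝ s f)
    (hb : ∀ j, T (b j) = (μ j : 𝕜) • b j) (hμ : ∀ j, μ j ∈ s) {x : E} (hx : ‖x‖ = 1) :
    ∑ j, ‖⟪b j, x⟫_𝕜‖ ^ 2 * f (μ j) ≤ f (RCLike.re ⟪x, T x⟫_𝕜) := by
  rw [re_inner_apply_self_eq_sum hb]
  exact hf.le_map_sum (fun j _ => by positivity) (sum_sq_norm_inner_eq_one hx) fun j _ => hμ j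

theorem ConcaveOn.sum_map_le_sum_map_re_inner_apply_self [Fintype κ] (hf : ConcaveOn ℝ s f)
    (hb : ∀ j, T (b j) = (μ j : 𝕜) • b j) (hμ : ∀ j, μ j ∈ s) (v : OrthonormalBasis κ 𝕜 E) :
    ∑ j, f (μ j) ≤ ∑ i, f (RCLike.re ⟪v i, T (v i)⟫_𝕜) :=
  calc ∑ j, f (μ j)
      = ∑ i, ∑ j, ‖⟪b j, v i⟫_𝕜‖ ^ 2 * f (μ j) := by
        rw [Finset.sum_comm]
        refine Finset.sum_congr rfl fun j _ => ?_
        rw [← Finset.sum_mul, v.sum_sq_norm_inner_left, b.norm_eq_one, one_pow, one_mul]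
    _ ≤ ∑ i, f (RCLike.re ⟪v i, T (v i)⟫_𝕜) :=
        Finset.sum_le_sum fun i _ =>
          hf.sum_mul_le_map_re_inner_apply_self hb hμ (v.norm_eq_one i)

end Eigenbasis

section Matrix

variable {𝕜 n : Type*} [RCLike 𝕜] [Fintype n] [DecidableEq n] {A B : Matrix n n 𝕜}
  {s : Set ℝ} {f : ℝ → ℝ}

theorem Matrix.IsHermitian.toEuclideanLin_eigenvectorBasis (hA : A.IsHermitian) (j : n) :
    toEuclideanLin A (hA.eigenvectorBasis j) = (hA.eigenvalues j : 𝕜) • hA.eigenvectorBasis j := by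
  rw [toLpLin_apply, hA.mulVec_eigenvectorBasis, ← RCLike.real_smul_eq_coe_smul]
  rfl

theorem Matrix.IsHermitian.re_inner_toEuclideanLin_eigenvectorBasis (hA : A.IsHermitian) (i : n) :
    RCLike.re ⟪hA.eigenvectorBasis i, toEuclideanLin A (hA.eigenvectorBasis i)⟫_𝕜 =
      hA.eigenvalues i := by
  rw [hA.toEuclideanLin_eigenvectorBasis, inner_smul_right, inner_self_eq_norm_sq_to_K,
    hA.eigenvectorBasis.norm_eq_one]
  simp

theorem Matrix.re_inner_toEuclideanLin_smul_add_smul (a b : ℝ) (x : EuclideanSpace 𝕜 n) :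
    RCLike.re ⟪x, toEuclideanLin (a • A + b • B) x⟫_𝕜 =
      a * RCLike.re ⟪x, toEuclideanLin A x⟫_𝕜 + b * RCLike.re ⟪x, toEuclideanLin B x⟫_𝕜 := by
  rw [RCLike.real_smul_eq_coe_smul (K := 𝕜) a, RCLike.real_smul_eq_coe_smul (K := 𝕜) b, map_add,
    map_smul, map_smul]
  simp only [LinearMap.add_apply, LinearMap.smul_apply, inner_add_right, inner_smul_right,
    map_add, RCLike.re_ofReal_mul]

theorem ConcaveOn.mul_sum_map_eigenvalues_add_mul_le (hf : ConcaveOn ℝ s f)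
    (hA : A.IsHermitian) (hB : B.IsHermitian) (hAs : ∀ i, hA.eigenvalues i ∈ s)
    (hBs : ∀ i, hB.eigenvalues i ∈ s) {a b : ℝ} (ha : 0 ≤ a) (hb : 0 ≤ b) (hab : a + b = 1)
    (hC : (a • A + b • B).IsHermitian) :
    a * ∑ i, f (hA.eigenvalues i) + b * ∑ i, f (hB.eigenvalues i) ≤
      ∑ i, f (hC.eigenvalues i) := by
  set v := hC.eigenvectorBasis
  have hmem {M : Matrix n n 𝕜} (hM : M.IsHermitian) (hMs : ∀ i, hM.eigenvalues i ∈ s) (i : n) :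
      RCLike.re ⟪v i, toEuclideanLin M (v i)⟫_𝕜 ∈ s :=
    re_inner_apply_self_mem hM.toEuclideanLin_eigenvectorBasis hf.1 hMs (v.norm_eq_one i)
  calc a * ∑ i, f (hA.eigenvalues i) + b * ∑ i, f (hB.eigenvalues i)
      ≤ a * ∑ i, f (RCLike.re ⟪v i, toEuclideanLin A (v i)⟫_𝕜) +
          b * ∑ i, f (RCLike.re ⟪v i, toEuclideanLin B (v i)⟫_𝕜) := by
        gcongr ?_ * ?_ + ?_ * ?_
        · exact hf.sum_map_le_sum_map_re_inner_apply_self hA.toEuclideanLin_eigenvectorBasis hAs v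
        · exact hf.sum_map_le_sum_map_re_inner_apply_self hB.toEuclideanLin_eigenvectorBasis hBs v
    _ ≤ ∑ i, f (a * RCLike.re ⟪v i, toEuclideanLin A (v i)⟫_𝕜 +
          b * RCLike.re ⟪v i, toEuclideanLin B (v i)⟫_𝕜) := by
        rw [Finset.mul_sum, Finset.mul_sum, ← Finset.sum_add_distrib]
        exact Finset.sum_le_sum fun i _ => hf.2 (hmem hA hAs i) (hmem hB hBs i) ha hb hab
    _ = ∑ i, f (hC.eigenvalues i) := by
        simp_rw [← re_inner_toEuclideanLin_smul_add_smul, v,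
          hC.re_inner_toEuclideanLin_eigenvectorBasis]

end Matrix

theorem arctan_trace_concave_on_psd
    (n : ℕ) (A B : Matrix (Fin n) (Fin n) ℝ)
    (hA : A.PosSemidef) (hB : B.PosSemidef)
    (t : ℝ) (ht : t ∈ Set.Icc (0:ℝ) 1)
    (hC : (t • A + (1 - t) • B).IsHermitian) :
    t * ∑ i, arctan (hA.1.eigenvalues i) + (1 - t) * ∑ i, arctan (hB.1.eigenvalues i) ≤
      ∑ i, arctan (hC.eigenvalues i) :=
  Real.concaveOn_arctan_Ici.mul_sum_map_eigenvalues_add_mul_le hA.1 hB.1 hA.eigenvalues_nonneg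
    hB.eigenvalues_nonneg ht.1 (sub_nonneg.2 ht.2) (add_sub_cancel t 1) hC
end

section
/- Let f : ℝ^n → ℝ be convex and differentiable with Df Hölder continuous of exponent β ∈ (0,1) (i.e., f ∈ C^{1,β}), and suppose its Legendre transform f* is C² on an open set containing ȳ₀ = Df(x₀). If D²f*(ȳ₀) is positive definite, then f is twice differentiable at x₀ with D²f(x₀) = (D²f*(ȳ₀))^{-1}; in particular f is C^{1,1} near x₀. -/
/-!
By Fenchel–Young, for convex differentiable `f` the supremum defining `f*` at `∇f x` is attained
at `x`; hence `y ↦ f* y - ⟪x, y⟫` is minimal at `∇f x` as soon as `f*` is finite near `∇f x`, and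
so `∇f* (∇f x) = x`. Thus `∇f*` is a left inverse of `∇f` near `x₀`, `∇f` is continuous by the
Hölder bound, and the easy half of the inverse function theorem makes `∇f` strictly
differentiable at `x₀` with derivative `(D²f* ȳ₀)⁻¹`, hence Lipschitz near `x₀`.

The subtle point is that `ȳ₀` is interior to the set where the supremum is finite. Otherwise a
supporting hyperplane of that convex set passes through `ȳ₀`; beyond it `f*` takes Lean's junk
value `0`, so `∇f*` vanishes there and `D²f* ȳ₀` kills the normal of the hyperplane, which
positive definiteness forbids.
-/

open Real RealInnerProductSpace Metric Set Filter Topology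

section Convex

variable {E : Type*} [NormedAddCommGroup E] [NormedSpace ℝ E]

theorem ConvexOn.apply_sub_le_of_hasFDerivAt {f : E → ℝ} {f' : StrongDual ℝ E} {x : E}
    (hf : ConvexOn ℝ univ f) (hx : HasFDerivAt f f' x) (z : E) :
    f' (z - x) ≤ f z - f x := by
  have hline : ConvexOn ℝ univ (f ∘ AffineMap.lineMap (k := ℝ) x z) := by
    simpa using hf.comp_affineMap (AffineMap.lineMap (k := ℝ) x z)
  have hderiv : HasDerivAt (f ∘ AffineMap.lineMap (k := ℝ) x z) (f' (z - x)) 0 := by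
    have hx' : HasFDerivAt f f' (AffineMap.lineMap x z (0 : ℝ)) := by simpa using hx
    exact hx'.comp_hasDerivAt 0 AffineMap.hasDerivAt_lineMap
  simpa [slope_def_field] using
    hline.le_slope_of_hasDerivAt (mem_univ 0) (mem_univ 1) one_pos hderiv

end Convex

section Separation

variable {E : Type*} [NormedAddCommGroup E] [InnerProductSpace ℝ E] [FiniteDimensional ℝ E]

theorem Convex.exists_forall_inner_le_of_notMem_interior {A : Set E} (hA : Convex ℝ A)
    {y₀ : E} (hy₀ : y₀ ∈ A) (hint : y₀ ∉ interior A) :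
    ∃ u ≠ 0, ∀ y ∈ A, ⟪u, y⟫ ≤ ⟪u, y₀⟫ := by
  by_cases hne : (interior A).Nonempty
  · obtain ⟨ℓ, hℓ, hmax⟩ := geometric_hahn_banach_of_nonempty_interior_point hA hint hne
    refine ⟨(InnerProductSpace.toDual ℝ E).symm ℓ, by simpa using hℓ, fun y hy => ?_⟩
    simpa [InnerProductSpace.toDual_symm_apply] using hmax y hy
  · have hdir : (affineSpan ℝ A).direction ≠ ⊤ := fun h =>
      hne (hA.interior_nonempty_iff_affineSpan_eq_top.mpr
        ((AffineSubspace.direction_eq_top_iff_of_nonempty ⟨y₀, subset_affineSpan ℝ A hy₀⟩).mp h))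
    obtain ⟨u, hu, hu0⟩ := Submodule.exists_mem_ne_zero_of_ne_bot
      (fun h => hdir (Submodule.orthogonal_eq_bot_iff.mp h))
    refine ⟨u, hu0, fun y hy => ?_⟩
    have hv : y - y₀ ∈ (affineSpan ℝ A).direction :=
      AffineSubspace.vsub_mem_direction (subset_affineSpan ℝ A hy) (subset_affineSpan ℝ A hy₀)
    have := Submodule.inner_left_of_mem_orthogonal hv hu
    rw [inner_sub_right] at this
    linarith

end Separation

theorem HasFDerivAt.apply_eq_zero_of_forall_pos {E F : Type*} [NormedAddCommGroup E]
    [NormedSpace ℝ E] [NormedAddCommGroup F] [NormedSpace ℝ F] {g : E → F} {A : E →L[ℝ] F}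
    {y₀ u : E} (hg : HasFDerivAt g A y₀) (hzero : ∀ t : ℝ, 0 < t → g (y₀ + t • u) = 0) :
    A u = 0 := by
  set q : ℝ → F := fun t => g (y₀ + t • u)
  have hq : HasDerivAt q (A u) 0 := by
    have hline : HasDerivAt (fun t : ℝ => y₀ + t • u) u 0 := by
      simpa using ((hasDerivAt_id (0 : ℝ)).smul_const u).const_add y₀
    exact (by simpa using hg : HasFDerivAt g A (y₀ + (0 : ℝ) • u)).comp_hasDerivAt 0 hline
  have hq0 : q 0 = 0 := by
    refine tendsto_nhds_unique
      (hq.continuousAt.tendsto.mono_left (nhdsWithin_le_nhds (s := Ioi 0))) ?_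
    exact tendsto_const_nhds.congr'
      (eventually_nhdsWithin_of_forall fun t ht => (hzero t ht).symm)
  have hconst : HasDerivWithinAt q 0 (Ioi 0) 0 :=
    (hasDerivWithinAt_const 0 (Ioi 0) (0 : F)).congr (fun t ht => hzero t ht) hq0
  exact (uniqueDiffWithinAt_Ioi 0).eq_deriv _ hq.hasDerivWithinAt hconst

section Legendre

variable {E : Type*} [NormedAddCommGroup E] [InnerProductSpace ℝ E]

noncomputable def legendre (f : E → ℝ) (y : E) : ℝ := ⨆ x, ⟪x, y⟫ - f x

def legendreDomain (f : E → ℝ) : Set E := {y | BddAbove (range fun x => ⟪x, y⟫ - f x)}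

theorem convex_legendreDomain (f : E → ℝ) : Convex ℝ (legendreDomain f) := by
  rintro y₁ ⟨M₁, hM₁⟩ y₂ ⟨M₂, hM₂⟩ a b ha hb hab
  refine ⟨a * M₁ + b * M₂, ?_⟩
  rintro _ ⟨z, rfl⟩
  have hsplit : ⟪z, a • y₁ + b • y₂⟫ - f z = a * (⟪z, y₁⟫ - f z) + b * (⟪z, y₂⟫ - f z) := by
    rw [inner_add_right, real_inner_smul_right, real_inner_smul_right]
    linear_combination (f z) * hab
  dsimp only
  rw [hsplit]
  gcongr
  exacts [hM₁ ⟨z, rfl⟩, hM₂ ⟨z, rfl⟩]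

theorem inner_sub_le_legendre {f : E → ℝ} {y : E} (hy : y ∈ legendreDomain f) (x : E) :
    ⟪x, y⟫ - f x ≤ legendre f y :=
  le_ciSup hy x

/-- Off the domain the supremum is unbounded and `⨆` returns the junk value `0`. -/
theorem legendre_eq_zero_of_notMem {f : E → ℝ} {y : E} (hy : y ∉ legendreDomain f) :
    legendre f y = 0 :=
  Real.iSup_of_not_bddAbove hy

variable [CompleteSpace E] {f : E → ℝ} {x : E}

theorem ConvexOn.isGreatest_inner_gradient_sub (hf : ConvexOn ℝ univ f)
    (hx : DifferentiableAt ℝ f x) :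
    IsGreatest (range fun z => ⟪z, gradient f x⟫ - f z) (⟪x, gradient f x⟫ - f x) := by
  refine ⟨⟨x, rfl⟩, ?_⟩
  rintro _ ⟨z, rfl⟩
  have := hf.apply_sub_le_of_hasFDerivAt hx.hasGradientAt.hasFDerivAt z
  rw [InnerProductSpace.toDual_apply_apply, inner_sub_right] at this
  simp only [real_inner_comm (gradient f x)] at this ⊢
  linarith

theorem ConvexOn.gradient_mem_legendreDomain (hf : ConvexOn ℝ univ f)
    (hx : DifferentiableAt ℝ f x) : gradient f x ∈ legendreDomain f :=
  (hf.isGreatest_inner_gradient_sub hx).bddAbove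

theorem ConvexOn.legendre_gradient (hf : ConvexOn ℝ univ f) (hx : DifferentiableAt ℝ f x) :
    legendre f (gradient f x) = ⟪x, gradient f x⟫ - f x :=
  (hf.isGreatest_inner_gradient_sub hx).csSup_eq

theorem ConvexOn.gradient_legendre_gradient (hf : ConvexOn ℝ univ f)
    (hx : DifferentiableAt ℝ f x) (hint : gradient f x ∈ interior (legendreDomain f))
    (hd : DifferentiableAt ℝ (legendre f) (gradient f x)) :
    gradient (legendre f) (gradient f x) = x := by
  have hmin : IsLocalMin (fun y => legendre f y - ⟪x, y⟫) (gradient f x) := by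
    filter_upwards [mem_interior_iff_mem_nhds.mp hint] with y hy
    linarith [inner_sub_le_legendre hy x, hf.legendre_gradient hx]
  have hzero := hmin.hasFDerivAt_eq_zero (hd.hasFDerivAt.sub (innerSL ℝ x).hasFDerivAt)
  rw [sub_eq_zero] at hzero
  rw [gradient, hzero]
  exact (InnerProductSpace.toDual ℝ E).symm_apply_apply x

end Legendre

theorem mem_interior_legendreDomain_of_injective {E : Type*} [NormedAddCommGroup E]
    [InnerProductSpace ℝ E] [FiniteDimensional ℝ E] {f : E → ℝ} {y₀ : E} {H : E →L[ℝ] E}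
    (hy₀ : y₀ ∈ legendreDomain f) (hH : HasFDerivAt (gradient (legendre f)) H y₀)
    (hinj : Function.Injective H) : y₀ ∈ interior (legendreDomain f) := by
  by_contra hint
  obtain ⟨u, hu, hsupp⟩ :=
    (convex_legendreDomain f).exists_forall_inner_le_of_notMem_interior hy₀ hint
  set P : Set E := {y | ⟪u, y₀⟫ < ⟪u, y⟫}
  have hP : IsOpen P := isOpen_lt continuous_const (continuous_const.inner continuous_id)
  have hgrad : ∀ y ∈ P, gradient (legendre f) y = 0 := fun y hy => by
    have hlocal : legendre f =ᶠ[𝓝 y] fun _ => 0 := by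
      filter_upwards [hP.mem_nhds hy] with w hw
      exact legendre_eq_zero_of_notMem fun hw' => (hsupp w hw').not_gt hw
    rw [hlocal.gradient_eq, gradient_fun_const]
  have hHu : H u = 0 := hH.apply_eq_zero_of_forall_pos fun t ht => hgrad _ <| by
    have : 0 < ⟪u, u⟫ := real_inner_self_pos.mpr hu
    simp only [P, mem_ofPred_eq, inner_add_right, real_inner_smul_right]
    nlinarith
  exact hu (hinj (by rw [hHu, map_zero]))

theorem continuousAt_of_norm_sub_le_mul_rpow {E F : Type*} [SeminormedAddCommGroup E]
    [SeminormedAddCommGroup F] {g : E → F} {x₀ : E} {L β : ℝ} (hβ : 0 < β)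
    (hg : ∀ x, ‖g x - g x₀‖ ≤ L * ‖x - x₀‖ ^ β) : ContinuousAt g x₀ := by
  rw [ContinuousAt, tendsto_iff_norm_sub_tendsto_zero]
  have hbound : Tendsto (fun x => L * ‖x - x₀‖ ^ β) (𝓝 x₀) (𝓝 (L * ‖x₀ - x₀‖ ^ β)) :=
    (continuous_const.mul ((continuous_norm.comp (continuous_sub_right x₀)).rpow_const
      fun _ => Or.inr hβ.le)).tendsto x₀
  rw [sub_self, norm_zero, zero_rpow hβ.ne', mul_zero] at hbound
  exact squeeze_zero_norm (fun x => (norm_norm _).trans_le (hg x)) hbound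

theorem ContDiffAt.gradient {E : Type*} [NormedAddCommGroup E] [InnerProductSpace ℝ E]
    [CompleteSpace E] {φ : E → ℝ} {y : E} {n : WithTop ℕ∞} (h : ContDiffAt ℝ (n + 1) φ y) :
    ContDiffAt ℝ n (gradient φ) y :=
  (InnerProductSpace.toDual ℝ E).symm.contDiff.comp_contDiffAt y (h.fderiv_right le_rfl)

theorem ContinuousLinearMap.injective_of_forall_inner_apply_self_pos {E : Type*}
    [NormedAddCommGroup E] [InnerProductSpace ℝ E] {T : E →L[ℝ] E}
    (hT : ∀ v, v ≠ 0 → 0 < ⟪T v, v⟫) : Function.Injective T := by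
  refine (injective_iff_map_eq_zero T).mpr fun v hv => ?_
  by_contra hne
  simpa [hv] using hT v hne

theorem HasStrictFDerivAt.exists_norm_sub_le_mul_on_ball {E F : Type*} [NormedAddCommGroup E]
    [NormedSpace ℝ E] [NormedAddCommGroup F] [NormedSpace ℝ F] {g : E → F} {g' : E →L[ℝ] F}
    {x₀ : E} (hg : HasStrictFDerivAt g g' x₀) :
    ∃ C : ℝ, ∃ r > (0 : ℝ), ∀ x ∈ ball x₀ r, ∀ y ∈ ball x₀ r, ‖g x - g y‖ ≤ C * ‖x - y‖ := by
  obtain ⟨K, t, ht, hlip⟩ := hg.exists_lipschitzOnWith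
  obtain ⟨r, hr, hball⟩ := Metric.mem_nhds_iff.mp ht
  exact ⟨K, r, hr, fun x hx y hy => by
    simpa only [dist_eq_norm] using hlip.dist_le_mul x (hball hx) y (hball hy)⟩

theorem legendre_duality_hessian_inverse
    (n : ℕ) (β L : ℝ) (hβ : β ∈ Set.Ioo (0:ℝ) 1)
    (f : EuclideanSpace ℝ (Fin n) → ℝ)
    (hconv : ConvexOn ℝ Set.univ f)
    (hdiff : Differentiable ℝ f)
    (hHolder : ∀ x y, ‖gradient f x - gradient f y‖ ≤ L * ‖x - y‖ ^ β)
    (fstar : EuclideanSpace ℝ (Fin n) → ℝ)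
    (hfstar : fstar = fun y => ⨆ x : EuclideanSpace ℝ (Fin n), (⟪x, y⟫ - f x))
    (x₀ : EuclideanSpace ℝ (Fin n))
    (s : Set (EuclideanSpace ℝ (Fin n))) (hs : s ∈ nhds (gradient f x₀))
    (hC2 : ContDiffOn ℝ 2 fstar s)
    (H : EuclideanSpace ℝ (Fin n) →L[ℝ] EuclideanSpace ℝ (Fin n))
    (hH : HasFDerivAt (gradient fstar) H (gradient f x₀))
    (hpos : ∀ v : EuclideanSpace ℝ (Fin n), v ≠ 0 → 0 < ⟪H v, v⟫) :
    ∃ G : EuclideanSpace ℝ (Fin n) →L[ℝ] EuclideanSpace ℝ (Fin n),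
      HasFDerivAt (gradient f) G x₀ ∧
      H.comp G = ContinuousLinearMap.id ℝ (EuclideanSpace ℝ (Fin n)) ∧
      G.comp H = ContinuousLinearMap.id ℝ (EuclideanSpace ℝ (Fin n)) ∧
      ∃ C : ℝ, ∃ r > (0:ℝ), ∀ x ∈ ball x₀ r, ∀ y ∈ ball x₀ r,
        ‖gradient f x - gradient f y‖ ≤ C * ‖x - y‖ := by
  obtain rfl : fstar = legendre f := hfstar
  have hinj := H.injective_of_forall_inner_apply_self_pos hpos
  set e := (LinearEquiv.ofInjectiveEndo H.toLinearMap hinj).toContinuousLinearEquiv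
  have he : (e : _ →L[ℝ] _) = H := rfl
  have hint : gradient f x₀ ∈ interior (legendreDomain f) :=
    mem_interior_legendreDomain_of_injective
      (hconv.gradient_mem_legendreDomain (hdiff x₀)) hH hinj
  have hcont : ContinuousAt (gradient f) x₀ :=
    continuousAt_of_norm_sub_le_mul_rpow hβ.1 fun x => hHolder x x₀
  have hstrict : HasStrictFDerivAt (gradient (legendre f)) (e : _ →L[ℝ] _) (gradient f x₀) := by
    rw [he, ← hH.fderiv]
    exact ((hC2 _ (mem_of_mem_nhds hs)).contDiffAt hs).gradient.hasStrictFDerivAt one_ne_zero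
  have hleft : ∀ᶠ x in 𝓝 x₀, gradient (legendre f) (gradient f x) = x := by
    filter_upwards [hcont.eventually_mem (inter_mem (isOpen_interior.mem_nhds hint)
      (interior_mem_nhds.mpr hs))] with x ⟨hxD, hxs⟩
    exact hconv.gradient_legendre_gradient (hdiff x) hxD
      ((hC2.differentiableOn two_ne_zero).differentiableAt (mem_interior_iff_mem_nhds.mp hxs))
  have hG := hstrict.of_local_left_inverse hcont hleft
  exact ⟨e.symm, hG.hasFDerivAt, he ▸ e.coe_comp_coe_symm, he ▸ e.coe_symm_comp_coe,
    hG.exists_norm_sub_le_mul_on_ball⟩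
end
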